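/- arXiv:2107.08090 — 6 statements merged into one kernel-verified Lean document; each statement's English description precedes it below -/
import Mathlib

section
/- Let n ≥ 1 and m ≥ 1 be integers and η > 0 a real number with m·η ≤ √n / 8. If a vector y ∈ ℝ^m satisfies ‖y‖₁ ≥ √n / 4 and ‖y‖₂ ≤ 1, then the set T = { i ∈ [m] : |yᵢ| ≥ η } has cardinality |T| ≥ n / 64. -/
/-!
The coordinates below `η` contribute at most `m η ≤ √n / 8` to `‖y‖₁`, so the large coordinates
carry at least `√n / 8` of it. By Cauchy–Schwarz on the large coordinates,
`(√n / 8)² ≤ |T| · ‖y‖₂² ≤ |T|`.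
-/

open Finset

variable {ι : Type*} [Fintype ι]

lemma sum_abs_filter_abs_lt_le_card_mul {η : ℝ} (hη : 0 ≤ η) (y : ι → ℝ) :
    ∑ i ∈ univ.filter (fun i => |y i| < η), |y i| ≤ Fintype.card ι * η :=
  calc ∑ i ∈ univ.filter (fun i => |y i| < η), |y i|
      ≤ ∑ _i ∈ univ.filter (fun i => |y i| < η), η :=
        sum_le_sum fun _ hi => (mem_filter.1 hi).2.le
    _ = #(univ.filter fun i => |y i| < η) * η := by rw [sum_const, nsmul_eq_mul]
    _ ≤ Fintype.card ι * η := by gcongr; exact card_le_univ _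

lemma sq_le_card_filter_le_abs {η a : ℝ} (hη : 0 ≤ η) (ha : 0 ≤ a) (y : ι → ℝ)
    (hl1 : Fintype.card ι * η + a ≤ ∑ i, |y i|) (hl2 : ∑ i, y i ^ 2 ≤ 1) :
    a ^ 2 ≤ #(univ.filter fun i => η ≤ |y i|) := by
  set T := univ.filter fun i => η ≤ |y i|
  have hlarge : a ≤ ∑ i ∈ T, |y i| := by
    have hsplit := sum_filter_add_sum_filter_not univ (fun i => η ≤ |y i|) fun i => |y i|
    simp only [not_le] at hsplit
    linarith [sum_abs_filter_abs_lt_le_card_mul hη y]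
  calc a ^ 2 ≤ (∑ i ∈ T, |y i|) ^ 2 := pow_le_pow_left₀ ha hlarge 2
    _ ≤ #T * ∑ i ∈ T, |y i| ^ 2 := sq_sum_le_card_mul_sum_sq
    _ = #T * ∑ i ∈ T, y i ^ 2 := by simp_rw [sq_abs]
    _ ≤ #T * 1 := by
        gcongr
        exact (sum_le_univ_sum_of_nonneg fun i => sq_nonneg (y i)).trans hl2
    _ = #T := mul_one _

theorem large_coordinates_count_general (n m : ℕ)
    (η : ℝ) (hη : 0 < η) (hmη : (m : ℝ) * η ≤ Real.sqrt n / 8)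
    (y : Fin m → ℝ)
    (hl1 : Real.sqrt n / 4 ≤ ∑ i, |y i|)
    (hl2 : Real.sqrt (∑ i, (y i) ^ 2) ≤ 1) :
    (n : ℝ) / 64 ≤ ((Finset.univ.filter fun i => η ≤ |y i|).card : ℝ) := by
  have hl1' : Fintype.card (Fin m) * η + Real.sqrt n / 8 ≤ ∑ i, |y i| := by
    rw [Fintype.card_fin]
    linarith
  calc (n : ℝ) / 64 = (Real.sqrt n / 8) ^ 2 := by
        rw [div_pow, Real.sq_sqrt (Nat.cast_nonneg n)]
        norm_num
    _ ≤ _ := sq_le_card_filter_le_abs hη.le (by positivity) y hl1' (Real.sqrt_le_one.1 hl2)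

/-- If `m·η ≤ √n / 8`, `‖y‖₁ ≥ √n / 4` and `‖y‖₂ ≤ 1`, then the number of
coordinates of `y` with `|yᵢ| ≥ η` is at least `n / 64`. -/
theorem large_coordinates_count (n m : ℕ) (hn : 1 ≤ n) (hm : 1 ≤ m)
    (η : ℝ) (hη : 0 < η) (hmη : (m : ℝ) * η ≤ Real.sqrt n / 8)
    (y : Fin m → ℝ)
    (hl1 : Real.sqrt n / 4 ≤ ∑ i, |y i|)
    (hl2 : Real.sqrt (∑ i, (y i) ^ 2) ≤ 1) :
    (n : ℝ) / 64 ≤ ((Finset.univ.filter fun i => η ≤ |y i|).card : ℝ) :=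
  large_coordinates_count_general n m η hη hmη y hl1 hl2
end

section
/- Let m ≥ 1, p ∈ (0,1], η > 0, let x ∈ ℝ^m, and let L ⊆ [m] be a set with |x_j| ≥ η for all j ∈ L and p·|L| ≥ 10. Let g ∈ ℝ^m be a random vector whose entries are mutually independent, each equal to +1 with probability p/2, equal to −1 with probability p/2, and equal to 0 with probability 1 − p. Then Pr[ |⟨g, x⟩| ≥ η ] ≥ 1/4. -/
/-!
Sum over the coordinates in `L` one at a time. If `R` is independent of `g_j` and `|x_j| ≥ η`,
then for every value of `R` at least one of `R + x_j`, `R - x_j` has absolute value `≥ η`, so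
`Pr[|g_j x_j + R| ≥ η] ≥ p/2 + (1 - p) Pr[|R| ≥ η]`. Iterating gives
`Pr[|⟨g, x⟩| ≥ η] ≥ (1 - (1 - p)^|L|)/2`, and `(1 - p)^|L| ≤ e^{-p|L|} ≤ 1/2`.
-/

open MeasureTheory ProbabilityTheory

noncomputable def sparseSign (p a : ℝ) : Measure ℝ :=
  ENNReal.ofReal (p / 2) • Measure.dirac a + ENNReal.ofReal (p / 2) • Measure.dirac (-a) +
    ENNReal.ofReal (1 - p) • Measure.dirac 0

namespace sparseSign

variable {p a : ℝ}

lemma map_mul_const (c : ℝ) : (sparseSign p a).map (· * c) = sparseSign p (a * c) := by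
  have hc : Measurable (· * c : ℝ → ℝ) := measurable_mul_const c
  simp only [sparseSign, Measure.map_add _ _ hc, Measure.map_smul, Measure.map_dirac' hc,
    neg_mul, zero_mul]

lemma lintegral_eq {f : ℝ → ENNReal} (hf : Measurable f) :
    ∫⁻ y, f y ∂sparseSign p a =
      ENNReal.ofReal (p / 2) * f a + ENNReal.ofReal (p / 2) * f (-a) +
        ENNReal.ofReal (1 - p) * f 0 := by
  simp only [sparseSign, lintegral_add_measure, lintegral_smul_measure, lintegral_dirac' _ hf,
    smul_eq_mul]

end sparseSign

lemma le_abs_add_or_le_abs_neg_add {η a : ℝ} (ha : η ≤ |a|) (b : ℝ) :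
    η ≤ |a + b| ∨ η ≤ |-a + b| := by
  by_contra! h
  simp only [abs_lt] at h
  rcases le_abs.1 ha with ha | ha <;> linarith [h.1.1, h.1.2, h.2.1, h.2.2]

lemma one_le_measure_abs_add_add_measure_abs_neg_add (ρ : Measure ℝ) [IsProbabilityMeasure ρ]
    {η a : ℝ} (ha : η ≤ |a|) :
    1 ≤ ρ {b | η ≤ |a + b|} + ρ {b | η ≤ |-a + b|} := by
  have hcover : {b | η ≤ |a + b|} ∪ {b | η ≤ |-a + b|} = Set.univ :=
    Set.eq_univ_of_forall (le_abs_add_or_le_abs_neg_add ha)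
  calc 1 = ρ ({b | η ≤ |a + b|} ∪ {b | η ≤ |-a + b|}) := by rw [hcover, measure_univ]
    _ ≤ _ := measure_union_le _ _

lemma ProbabilityTheory.IndepFun.measure_preimage_pair_eq_lintegral {Ω α β : Type*}
    [MeasurableSpace Ω] [MeasurableSpace α] [MeasurableSpace β] {μ : Measure Ω} [IsFiniteMeasure μ]
    {X : Ω → α} {Y : Ω → β} (hX : Measurable X) (hY : Measurable Y) (hXY : IndepFun X Y μ)
    {T : Set (α × β)} (hT : MeasurableSet T) :
    μ ((fun ω => (X ω, Y ω)) ⁻¹' T) = ∫⁻ x, μ.map Y (Prod.mk x ⁻¹' T) ∂μ.map X := by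
  rw [← Measure.prod_apply hT, ← (indepFun_iff_map_prod_eq_prod_map_map hX.aemeasurable
    hY.aemeasurable).1 hXY, Measure.map_apply (hX.prodMk hY) hT]

section

variable {Ω : Type*} [MeasurableSpace Ω] {μ : Measure Ω} [IsProbabilityMeasure μ]

lemma measure_le_abs_add_of_indepFun {Y R : Ω → ℝ} (hY : Measurable Y) (hR : Measurable R)
    (hYR : IndepFun Y R μ) {p a η : ℝ} (hlaw : μ.map Y = sparseSign p a) (ha : η ≤ |a|) :
    ENNReal.ofReal (p / 2) + ENNReal.ofReal (1 - p) * μ {ω | η ≤ |R ω|} ≤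
      μ {ω | η ≤ |Y ω + R ω|} := by
  have : IsProbabilityMeasure (μ.map R) := Measure.isProbabilityMeasure_map hR.aemeasurable
  have hT : MeasurableSet {q : ℝ × ℝ | η ≤ |q.1 + q.2|} := measurableSet_le measurable_const
    (by fun_prop)
  have hslice : Measurable fun y => μ.map R (Prod.mk y ⁻¹' {q : ℝ × ℝ | η ≤ |q.1 + q.2|}) :=
    measurable_measure_prodMk_left hT
  have hR0 : μ {ω | η ≤ |R ω|} = μ.map R {b | η ≤ |0 + b|} := by
    rw [Measure.map_apply hR (measurableSet_le measurable_const (by fun_prop))]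
    simp only [zero_add, Set.preimage_ofPred_eq]
  rw [show {ω | η ≤ |Y ω + R ω|} = (fun ω => (Y ω, R ω)) ⁻¹' {q | η ≤ |q.1 + q.2|} from rfl,
    hYR.measure_preimage_pair_eq_lintegral hY hR hT, hlaw,
    sparseSign.lintegral_eq hslice, hR0, ← mul_add]
  refine add_le_add ?_ le_rfl
  calc ENNReal.ofReal (p / 2) = ENNReal.ofReal (p / 2) * 1 := (mul_one _).symm
    _ ≤ _ := by gcongr; exact one_le_measure_abs_add_add_measure_abs_neg_add _ ha

lemma le_measure_abs_sum_of_subset {ι : Type*} [DecidableEq ι] {g : ι → Ω → ℝ}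
    (hmeas : ∀ j, Measurable (g j)) (hindep : iIndepFun g μ) {p : ℝ} (hp0 : 0 ≤ p) (hp1 : p ≤ 1)
    (hlaw : ∀ j, μ.map (g j) = sparseSign p 1) {η : ℝ} {x : ι → ℝ} {L : Finset ι}
    (hL : ∀ j ∈ L, η ≤ |x j|) {s : Finset ι} (hLs : L ⊆ s) :
    ENNReal.ofReal ((1 - (1 - p) ^ L.card) / 2) ≤ μ {ω | η ≤ |∑ j ∈ s, g j ω * x j|} := by
  induction L using Finset.induction_on generalizing s with
  | empty => simp
  | @insert j₀ L hj₀ ih =>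
    have hf : ∀ j, Measurable fun ω => g j ω * x j := fun j => (hmeas j).mul_const _
    have hYR : IndepFun (fun ω => g j₀ ω * x j₀) (fun ω => ∑ j ∈ s.erase j₀, g j ω * x j) μ := by
      have hfind : iIndepFun (fun j ω => g j ω * x j) μ :=
        hindep.comp (fun j a => a * x j) fun j => measurable_mul_const (x j)
      have := hfind.indepFun_finsetSum_of_notMem hf (Finset.notMem_erase j₀ s)
      rw [Finset.sum_fn] at this
      exact this.symm
    have hlawY : μ.map (fun ω => g j₀ ω * x j₀) = sparseSign p (1 * x j₀) := by
      rw [← sparseSign.map_mul_const, ← hlaw j₀,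
        Measure.map_map (measurable_mul_const _) (hmeas j₀)]
      rfl
    have hj₀x : η ≤ |1 * x j₀| := by rw [one_mul]; exact hL j₀ (Finset.mem_insert_self j₀ L)
    have hsplit : ∀ ω, ∑ j ∈ s, g j ω * x j = g j₀ ω * x j₀ + ∑ j ∈ s.erase j₀, g j ω * x j :=
      fun ω => (Finset.add_sum_erase _ _ (hLs (Finset.mem_insert_self j₀ L))).symm
    have ih' := ih (fun j hj => hL j (Finset.mem_insert_of_mem hj))
      (Finset.subset_erase.2 ⟨(Finset.subset_insert j₀ L).trans hLs, hj₀⟩)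
    have hq : 0 ≤ (1 - (1 - p) ^ L.card) / 2 := by
      have : (1 - p) ^ L.card ≤ 1 := pow_le_one₀ (by linarith) (by linarith)
      linarith
    simp only [hsplit]
    calc ENNReal.ofReal ((1 - (1 - p) ^ (insert j₀ L).card) / 2)
        = ENNReal.ofReal (p / 2) +
            ENNReal.ofReal (1 - p) * ENNReal.ofReal ((1 - (1 - p) ^ L.card) / 2) := by
          rw [Finset.card_insert_of_notMem hj₀, ← ENNReal.ofReal_mul (by linarith),
            ← ENNReal.ofReal_add (by linarith) (mul_nonneg (by linarith) hq)]
          ring_nf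
      _ ≤ ENNReal.ofReal (p / 2) +
            ENNReal.ofReal (1 - p) * μ {ω | η ≤ |∑ j ∈ s.erase j₀, g j ω * x j|} := by
          gcongr
      _ ≤ _ := measure_le_abs_add_of_indepFun (hf j₀) (Finset.measurable_sum _ fun j _ => hf j)
          hYR hlawY hj₀x

end

lemma one_sub_pow_le_half {p : ℝ} {n : ℕ} (hp1 : p ≤ 1) (hpn : 1 ≤ p * n) :
    (1 - p) ^ n ≤ 1 / 2 :=
  calc (1 - p) ^ n ≤ Real.exp (-p) ^ n :=
        pow_le_pow_left₀ (by linarith) (Real.one_sub_le_exp_neg p) n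
    _ = Real.exp (-(p * n)) := by rw [← Real.exp_nat_mul]; ring_nf
    _ ≤ Real.exp (-1) := by gcongr
    _ ≤ 1 / 2 := Real.exp_neg_one_lt_half.le

theorem sparse_sign_row_hits_general {Ω : Type*} [MeasurableSpace Ω]
    (μ : Measure Ω) [IsProbabilityMeasure μ]
    (m : ℕ) (p : ℝ) (hp0 : 0 < p) (hp1 : p ≤ 1)
    (η : ℝ)
    (x : Fin m → ℝ) (L : Finset (Fin m)) (hL : ∀ j ∈ L, η ≤ |x j|)
    (hpL : 10 ≤ p * (L.card : ℝ))
    (g : Ω → Fin m → ℝ)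
    (hmeas : ∀ j, Measurable fun ω => g ω j)
    (hindep : iIndepFun (fun j ω => g ω j) μ)
    (hdist : ∀ j, Measure.map (fun ω => g ω j) μ =
      ENNReal.ofReal (p / 2) • Measure.dirac (1 : ℝ) +
      ENNReal.ofReal (p / 2) • Measure.dirac (-1 : ℝ) +
      ENNReal.ofReal (1 - p) • Measure.dirac (0 : ℝ)) :
    ENNReal.ofReal (1 / 4) ≤ μ {ω | η ≤ |∑ j, g ω j * x j|} := by
  have hsmall : (1 - p) ^ L.card ≤ 1 / 2 := one_sub_pow_le_half hp1 (by linarith)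
  calc ENNReal.ofReal (1 / 4) ≤ ENNReal.ofReal ((1 - (1 - p) ^ L.card) / 2) :=
        ENNReal.ofReal_le_ofReal (by linarith)
    _ ≤ _ := le_measure_abs_sum_of_subset hmeas hindep hp0.le hp1 hdist hL (Finset.subset_univ L)

/-- If `x ∈ ℝ^m` has a set `L` of coordinates with `|x_j| ≥ η` and `p·|L| ≥ 10`,
and `g` is a random vector with mutually independent entries that are `+1` with probability
`p/2`, `-1` with probability `p/2` and `0` with probability `1-p`, then
`Pr[|⟨g,x⟩| ≥ η] ≥ 1/4`. -/
theorem sparse_sign_row_hits {Ω : Type*} [MeasurableSpace Ω]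
    (μ : Measure Ω) [IsProbabilityMeasure μ]
    (m : ℕ) (hm : 1 ≤ m) (p : ℝ) (hp0 : 0 < p) (hp1 : p ≤ 1)
    (η : ℝ) (hη : 0 < η)
    (x : Fin m → ℝ) (L : Finset (Fin m)) (hL : ∀ j ∈ L, η ≤ |x j|)
    (hpL : 10 ≤ p * (L.card : ℝ))
    (g : Ω → Fin m → ℝ)
    (hmeas : ∀ j, Measurable fun ω => g ω j)
    (hindep : iIndepFun (fun j ω => g ω j) μ)
    (hdist : ∀ j, Measure.map (fun ω => g ω j) μ =
      ENNReal.ofReal (p / 2) • Measure.dirac (1 : ℝ) +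
      ENNReal.ofReal (p / 2) • Measure.dirac (-1 : ℝ) +
      ENNReal.ofReal (1 - p) • Measure.dirac (0 : ℝ)) :
    ENNReal.ofReal (1 / 4) ≤ μ {ω | η ≤ |∑ j, g ω j * x j|} :=
  sparse_sign_row_hits_general μ m p hp0 hp1 η x L hL hpL g hmeas hindep hdist
end

section
/- Let A ∈ ℝ^{n×k} have full column rank, let β ≥ 1, and let S be a matrix such that for every x ∈ ℝ^k, ‖Ax‖₂ ≤ ‖SAx‖₂ ≤ β‖Ax‖₂. Suppose SA = Q R^{-1} where Q has orthonormal columns and R ∈ ℝ^{k×k} is invertible. Then for every i ∈ [n], ℓ_i²/β² ≤ ‖A_{i*} R‖₂² ≤ ℓ_i², where ℓ_i² is the leverage score of the i-th row of A and A_{i*} denotes the i-th row of A. -/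
/-!
Put `T := Uᵀ A R`. Since `U Uᵀ` fixes the column span of `A`, we have `A R = U T`, so row `i`
of `A R` is `Tᵀ` applied to row `i` of `U`, whose squared norm is `ℓᵢ²`. As `U` and `Q = S A R`
are isometries, the embedding property applied to `R x` reads `‖T x‖ ≤ ‖x‖ ≤ β ‖T x‖`, i.e. the
singular values of `T` lie in `[1/β, 1]`. The same then holds for `Tᵀ`, which gives both bounds.
-/

open Matrix

theorem sum_sq_eq_dotProduct_self {ι : Type*} [Fintype ι] (v : ι → ℝ) :
    ∑ i, v i ^ 2 = v ⬝ᵥ v := by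
  simp only [dotProduct, sq]

theorem dotProduct_self_le_and_le_of_sqrt_sum_sq {ι κ : Type*} [Fintype ι] [Fintype κ]
    (u : ι → ℝ) (v : κ → ℝ) {β : ℝ} (hβ : 0 ≤ β)
    (h : √(∑ i, u i ^ 2) ≤ √(∑ i, v i ^ 2) ∧ √(∑ i, v i ^ 2) ≤ β * √(∑ i, u i ^ 2)) :
    u ⬝ᵥ u ≤ v ⬝ᵥ v ∧ v ⬝ᵥ v ≤ β ^ 2 * (u ⬝ᵥ u) := by
  have hu : 0 ≤ ∑ i, u i ^ 2 := Finset.sum_nonneg fun i _ => sq_nonneg (u i)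
  have hv : 0 ≤ ∑ i, v i ^ 2 := Finset.sum_nonneg fun i _ => sq_nonneg (v i)
  rw [← Real.sqrt_sq hβ, ← Real.sqrt_mul (sq_nonneg β), Real.sqrt_le_sqrt_iff hv,
    Real.sqrt_le_sqrt_iff (by positivity)] at h
  simpa only [sum_sq_eq_dotProduct_self] using h

section Matrix

variable {m n : Type*} [Fintype m] [Fintype n]

theorem dotProduct_mulVec_self_of_transpose_mul_self [DecidableEq n] {α : Type*}
    [CommSemiring α] {U : Matrix m n α} (hU : Uᵀ * U = 1) (w : n → α) :
    U *ᵥ w ⬝ᵥ U *ᵥ w = w ⬝ᵥ w := by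
  rw [dotProduct_mulVec, ← mulVec_transpose, mulVec_mulVec, hU, one_mulVec]

theorem mul_transpose_mul_of_range_mulVec_subset [DecidableEq n] {p : Type*} [Fintype p]
    {α : Type*} [CommSemiring α] {U : Matrix m n α} {A : Matrix m p α} (hU : Uᵀ * U = 1)
    (hUA : Set.range A.mulVec ⊆ Set.range U.mulVec) : U * Uᵀ * A = A := by
  refine ext_iff_mulVec.2 fun v => ?_
  obtain ⟨w, hw⟩ := hUA ⟨v, rfl⟩
  rw [← mulVec_mulVec, ← mulVec_mulVec, ← hw, mulVec_mulVec w Uᵀ U, hU, one_mulVec]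

theorem transpose_mulVec_dotProduct_self_le {T : Matrix m n ℝ} {c : ℝ} (hc : 0 ≤ c)
    (hT : ∀ x, T *ᵥ x ⬝ᵥ T *ᵥ x ≤ c * (x ⬝ᵥ x)) (y : m → ℝ) :
    Tᵀ *ᵥ y ⬝ᵥ Tᵀ *ᵥ y ≤ c * (y ⬝ᵥ y) := by
  set w := Tᵀ *ᵥ y
  have hy : 0 ≤ y ⬝ᵥ y := Finset.sum_nonneg fun i _ => mul_self_nonneg (y i)
  have hw : 0 ≤ w ⬝ᵥ w := Finset.sum_nonneg fun i _ => mul_self_nonneg (w i)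
  have key : (w ⬝ᵥ w) * (w ⬝ᵥ w) ≤ c * (y ⬝ᵥ y) * (w ⬝ᵥ w) :=
    calc (w ⬝ᵥ w) * (w ⬝ᵥ w) = (y ⬝ᵥ T *ᵥ w) ^ 2 := by
          rw [dotProduct_mulVec y T w, ← mulVec_transpose, sq]
      _ ≤ (y ⬝ᵥ y) * (T *ᵥ w ⬝ᵥ T *ᵥ w) := by
          simpa only [dotProduct, sq] using Finset.sum_mul_sq_le_sq_mul_sq _ y (T *ᵥ w)
      _ ≤ (y ⬝ᵥ y) * (c * (w ⬝ᵥ w)) := mul_le_mul_of_nonneg_left (hT w) hy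
      _ = c * (y ⬝ᵥ y) * (w ⬝ᵥ w) := by ring
  rcases hw.eq_or_lt with hw0 | hw0
  · rw [← hw0]
    positivity
  · exact le_of_mul_le_mul_right key hw0

theorem dotProduct_self_le_transpose_mulVec [DecidableEq n] {T : Matrix n n ℝ} {c : ℝ}
    (hc : 0 ≤ c) (hT : ∀ x, x ⬝ᵥ x ≤ c * (T *ᵥ x ⬝ᵥ T *ᵥ x)) (y : n → ℝ) :
    y ⬝ᵥ y ≤ c * (Tᵀ *ᵥ y ⬝ᵥ Tᵀ *ᵥ y) := by
  have hinj : Function.Injective T.mulVec := fun a b hab => by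
    have h := hT (a - b)
    rw [mulVec_sub, hab, sub_self, zero_dotProduct, mul_zero] at h
    exact sub_eq_zero.1 <| dotProduct_self_eq_zero.1 <|
      le_antisymm h (Finset.sum_nonneg fun i _ => mul_self_nonneg _)
  -- The lower bound makes `T` invertible and bounds `T⁻¹` from above; `(T⁻¹)ᵀ` inverts `Tᵀ`.
  have hdet : IsUnit T.det := (isUnit_iff_isUnit_det T).1 (mulVec_injective_iff_isUnit.1 hinj)
  have hTinv : ∀ z, T⁻¹ *ᵥ z ⬝ᵥ T⁻¹ *ᵥ z ≤ c * (z ⬝ᵥ z) := fun z => by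
    simpa only [mulVec_mulVec, mul_nonsing_inv T hdet, one_mulVec] using hT (T⁻¹ *ᵥ z)
  simpa only [mulVec_mulVec, ← transpose_mul, mul_nonsing_inv T hdet, transpose_one,
    one_mulVec] using transpose_mulVec_dotProduct_self_le hc hTinv (Tᵀ *ᵥ y)

end Matrix

theorem approx_leverage_scores_from_embedding_general (n k s : ℕ)
    (A : Matrix (Fin n) (Fin k) ℝ)
    (U : Matrix (Fin n) (Fin k) ℝ) (hU : Uᵀ * U = 1)
    (hUA : Set.range U.mulVec = Set.range A.mulVec)
    (ℓsq : Fin n → ℝ) (hℓ : ∀ i, ℓsq i = ∑ j, (U i j) ^ 2)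
    (β : ℝ) (hβ : 1 ≤ β)
    (S : Matrix (Fin s) (Fin n) ℝ)
    (hS : ∀ x : Fin k → ℝ,
      Real.sqrt (∑ i, (A.mulVec x i) ^ 2) ≤ Real.sqrt (∑ i, ((S * A).mulVec x i) ^ 2) ∧
      Real.sqrt (∑ i, ((S * A).mulVec x i) ^ 2) ≤ β * Real.sqrt (∑ i, (A.mulVec x i) ^ 2))
    (Q : Matrix (Fin s) (Fin k) ℝ) (hQ : Qᵀ * Q = 1)
    (R : Matrix (Fin k) (Fin k) ℝ) (hR : IsUnit R.det)
    (hQR : S * A = Q * R⁻¹) :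
    ∀ i, ℓsq i / β ^ 2 ≤ ∑ j, ((A * R) i j) ^ 2 ∧ (∑ j, ((A * R) i j) ^ 2) ≤ ℓsq i := by
  have hβ0 : 0 < β := by linarith
  obtain ⟨T, hAR⟩ : ∃ T, A * R = U * T := ⟨Uᵀ * A * R, by
    rw [← Matrix.mul_assoc, ← Matrix.mul_assoc,
      mul_transpose_mul_of_range_mulVec_subset hU hUA.ge]⟩
  have hSAR : S * A * R = Q := by
    rw [hQR, Matrix.mul_assoc, nonsing_inv_mul R hR, Matrix.mul_one]
  have hT : ∀ x, T *ᵥ x ⬝ᵥ T *ᵥ x ≤ x ⬝ᵥ x ∧ x ⬝ᵥ x ≤ β ^ 2 * (T *ᵥ x ⬝ᵥ T *ᵥ x) := fun x => by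
    have h := dotProduct_self_le_and_le_of_sqrt_sum_sq _ _ hβ0.le (hS (R *ᵥ x))
    rwa [mulVec_mulVec, mulVec_mulVec, hSAR, hAR, ← mulVec_mulVec,
      dotProduct_mulVec_self_of_transpose_mul_self hU,
      dotProduct_mulVec_self_of_transpose_mul_self hQ] at h
  intro i
  have hrow : (A * R) i = Tᵀ *ᵥ U i := by rw [hAR, mul_apply_eq_vecMul, mulVec_transpose]
  rw [hℓ i, sum_sq_eq_dotProduct_self, sum_sq_eq_dotProduct_self ((A * R) i), hrow]
  constructor
  · rw [div_le_iff₀ (by positivity), mul_comm]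
    exact dotProduct_self_le_transpose_mulVec (sq_nonneg β) (fun x => (hT x).2) (U i)
  · simpa only [one_mul] using transpose_mulVec_dotProduct_self_le zero_le_one
      (fun x => by simpa only [one_mul] using (hT x).1) (U i)

/-- If `S` is a `β`-distortion subspace embedding for the column span of the
full column rank matrix `A`, and `SA = Q·R⁻¹` with `Q` having orthonormal columns and `R`
invertible, then `ℓ_i²/β² ≤ ‖A_{i*}R‖₂² ≤ ℓ_i²` for every row `i`, where the leverage
scores `ℓ_i²` are given by an orthonormal basis `U` of the column span of `A`. -/
theorem approx_leverage_scores_from_embedding (n k s : ℕ)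
    (A : Matrix (Fin n) (Fin k) ℝ) (hA : A.rank = k)
    (U : Matrix (Fin n) (Fin k) ℝ) (hU : Uᵀ * U = 1)
    (hUA : Set.range U.mulVec = Set.range A.mulVec)
    (ℓsq : Fin n → ℝ) (hℓ : ∀ i, ℓsq i = ∑ j, (U i j) ^ 2)
    (β : ℝ) (hβ : 1 ≤ β)
    (S : Matrix (Fin s) (Fin n) ℝ)
    (hS : ∀ x : Fin k → ℝ,
      Real.sqrt (∑ i, (A.mulVec x i) ^ 2) ≤ Real.sqrt (∑ i, ((S * A).mulVec x i) ^ 2) ∧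
      Real.sqrt (∑ i, ((S * A).mulVec x i) ^ 2) ≤ β * Real.sqrt (∑ i, (A.mulVec x i) ^ 2))
    (Q : Matrix (Fin s) (Fin k) ℝ) (hQ : Qᵀ * Q = 1)
    (R : Matrix (Fin k) (Fin k) ℝ) (hR : IsUnit R.det)
    (hQR : S * A = Q * R⁻¹) :
    ∀ i, ℓsq i / β ^ 2 ≤ ∑ j, ((A * R) i j) ^ 2 ∧ (∑ j, ((A * R) i j) ^ 2) ≤ ℓsq i :=
  approx_leverage_scores_from_embedding_general n k s A U hU hUA ℓsq hℓ β hβ S hS Q hQ R hR hQR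
end

section
/- Let A ∈ ℝ^{n×d}, let V be a linear subspace of ℝ^d with orthogonal projection P_V, and let E = A − A·P_V (the matrix obtained by projecting each row of A away from V). Let k ≥ 0 be an integer, s > 0, α ∈ (0,1], and let p_1, …, p_n satisfy p_i ≥ α·‖E_{i*}‖₂²/‖E‖_F² for all i. Form a random subset S ⊆ [n] by including each i ∈ [n] independently with probability q_i = min(1, s·p_i). Then E_S[ inf { ‖A − B‖_F² : B ∈ ℝ^{n×d}, rank(B) ≤ k, rowspan(B) ⊆ V + rowspan(A_S) } ] ≤ ‖A − [A]_k‖_F² + (k/(s·α))·‖E‖_F², where A_S denotes the row submatrix of A indexed by S. -/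
/-!
Fix a competitor `B₀` of rank at most `k` and a matrix `U` whose columns form an orthonormal basis
of the column space of `B₀`. With the importance weights `C = diag(Zᵢ / qᵢ)`, the random matrix
`U Uᵀ (A P + C E)` has rank at most `k` and its rows lie in `V + rowspan(A_S)`. By Pythagoras its
cost is `‖A - U Uᵀ A‖² + ‖Uᵀ (I - C) E‖²`. The first term is at most `‖A - B₀‖²`; the diagonal
entries of `I - C` are independent and of variance `1/qᵢ - 1`, and centred wherever `E_{i*} ≠ 0`
(which forces `qᵢ > 0`), so the second term has
expectation `∑ᵢ ‖U_{i*}‖² ‖E_{i*}‖² (1/qᵢ - 1)`, which is at most `k ‖E‖² / (s α)` because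
`(1/qᵢ - 1) ‖E_{i*}‖² ≤ ‖E‖² / (s α)` and `∑ᵢ ‖U_{i*}‖² = rank B₀`.
-/

open MeasureTheory ProbabilityTheory Matrix

namespace Matrix

variable {l m n : Type*} [Fintype m] [Fintype n]

def frobeniusSq (M : Matrix m n ℝ) : ℝ := ∑ i, ∑ j, M i j ^ 2

lemma frobeniusSq_nonneg (M : Matrix m n ℝ) : 0 ≤ frobeniusSq M := by
  unfold frobeniusSq
  positivity

lemma frobeniusSq_eq_trace (M : Matrix m n ℝ) : frobeniusSq M = trace (Mᵀ * M) := by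
  simp only [frobeniusSq, trace, diag, mul_apply, transpose_apply, sq]
  exact Finset.sum_comm

lemma frobeniusSq_sub_mul [Fintype l] [DecidableEq l] {U : Matrix m l ℝ} (hU : Uᵀ * U = 1)
    (A : Matrix m n ℝ) (W : Matrix l n ℝ) :
    frobeniusSq (A - U * W) = frobeniusSq (A - U * Uᵀ * A) + frobeniusSq (Uᵀ * A - W) := by
  set R := A - U * Uᵀ * A
  set D := Uᵀ * A - W
  have hsplit : A - U * W = R + U * D := by
    simp only [R, D, Matrix.mul_sub, Matrix.mul_assoc]
    abel
  have hUR : Uᵀ * R = 0 := by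
    simp only [R, Matrix.mul_sub, ← Matrix.mul_assoc, hU, Matrix.one_mul, sub_self]
  have hRU : Rᵀ * U = 0 := by
    rw [← transpose_transpose U, ← transpose_mul, hUR, transpose_zero]
  simp only [frobeniusSq_eq_trace, hsplit, transpose_add, transpose_mul, Matrix.add_mul,
    Matrix.mul_add, trace_add]
  rw [← Matrix.mul_assoc, hRU, Matrix.mul_assoc Dᵀ, hUR, Matrix.mul_assoc, ← Matrix.mul_assoc Uᵀ,
    hU]
  simp

lemma frobeniusSq_sub_mul_transpose_mul_le [Fintype l] [DecidableEq l] {U : Matrix m l ℝ}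
    (hU : Uᵀ * U = 1) {A B : Matrix m n ℝ} (hUB : U * Uᵀ * B = B) :
    frobeniusSq (A - U * Uᵀ * A) ≤ frobeniusSq (A - B) := by
  have h := frobeniusSq_sub_mul hU A (Uᵀ * B)
  rw [← Matrix.mul_assoc, hUB] at h
  linarith [frobeniusSq_nonneg (Uᵀ * A - Uᵀ * B)]

omit [Fintype n] in
lemma span_rows_mul_le {R : Type*} [CommRing R] (X : Matrix l m R) (Y : Matrix m n R) :
    Submodule.span R (Set.range (X * Y)) ≤ Submodule.span R (Set.range Y) := by
  rw [Submodule.span_le]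
  rintro _ ⟨i, rfl⟩
  rw [mul_apply_eq_vecMul, vecMul_eq_sum]
  exact Submodule.sum_mem _ fun k _ => Submodule.smul_mem _ _ (Submodule.subset_span ⟨k, rfl⟩)

lemma exists_orthonormal_cols_mul_transpose_mul (B : Matrix m n ℝ) :
    ∃ U : Matrix m (Fin B.rank) ℝ, Uᵀ * U = 1 ∧ U * Uᵀ * B = B := by
  classical
  let e := (WithLp.linearEquiv 2 ℝ (m → ℝ)).symm
  let W : Submodule ℝ (EuclideanSpace ℝ m) :=
    (Submodule.span ℝ (Set.range Bᵀ)).map (e : (m → ℝ) →ₗ[ℝ] EuclideanSpace ℝ m)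
  have hW : Module.finrank ℝ W = B.rank :=
    (LinearEquiv.finrank_map_eq e _).trans B.rank_eq_finrank_span_cols.symm
  let b := (stdOrthonormalBasis ℝ W).reindex (finCongr hW)
  refine ⟨Matrix.of fun i t => (b t : EuclideanSpace ℝ m) i, ?_, ?_⟩
  · ext t t'
    simpa [mul_apply, one_apply, Submodule.coe_inner, EuclideanSpace.inner_eq_star_dotProduct,
      dotProduct, mul_comm] using orthonormal_iff_ite.mp b.orthonormal t t'
  · ext i j
    have hcol : e (Bᵀ j) ∈ W := Submodule.mem_map_of_mem (Submodule.subset_span ⟨j, rfl⟩)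
    have hexpand := congr_arg (· i) ((W.starProjection_eq_self_iff.mpr hcol).symm.trans
      (congr_arg (· (e (Bᵀ j))) b.starProjection_eq_sum_rankOne))
    simp only [_root_.sum_apply, InnerProductSpace.rankOne_apply,
      EuclideanSpace.inner_eq_star_dotProduct, dotProduct, Pi.star_apply, star_trivial,
      WithLp.ofLp_sum, WithLp.ofLp_smul, Finset.sum_apply, Pi.smul_apply, smul_eq_mul] at hexpand
    rw [Matrix.mul_assoc]
    simpa [e, mul_apply, mul_comm] using hexpand.symm

end Matrix

lemma pos_of_eq_min_of_div_le {s α p q e E : ℝ} (hs : 0 < s) (hα : 0 < α) (he : 0 < e)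
    (heE : e ≤ E) (hp : α * e / E ≤ p) (hq : q = min 1 (s * p)) : 0 < q := by
  rw [hq]
  exact lt_min one_pos (mul_pos hs ((div_pos (mul_pos hα he) (he.trans_le heE)).trans_le hp))

lemma inv_sub_one_mul_le_div {s α p q e E : ℝ} (hs : 0 < s) (hα : 0 < α) (he : 0 ≤ e)
    (heE : e ≤ E) (hp : α * e / E ≤ p) (hq : q = min 1 (s * p)) :
    (q⁻¹ - 1) * e ≤ E / (s * α) := by
  have hE0 : 0 ≤ E := he.trans heE
  have hbound : 0 ≤ E / (s * α) := by positivity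
  rcases le_total 1 (s * p) with h1 | h1
  · simp [hq, min_eq_left h1, hbound]
  rw [hq, min_eq_right h1]
  have hp0 : 0 ≤ p := (div_nonneg (by positivity) hE0).trans hp
  have hαe : α * e ≤ p * E := by
    rcases hE0.eq_or_lt with hE | hE
    · obtain rfl : e = 0 := by linarith
      simp [← hE]
    · exact (div_le_iff₀ hE).mp hp
  rcases (mul_nonneg hs.le hp0).eq_or_lt with hsp | hsp
  · rw [← hsp, _root_.inv_zero]
    linarith
  calc ((s * p)⁻¹ - 1) * e ≤ e / (s * p) := by
        rw [sub_mul, one_mul, inv_mul_eq_div]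
        linarith
    _ ≤ E / (s * α) := by
        rw [div_le_div_iff₀ hsp (by positivity)]
        nlinarith

lemma ENNReal.le_ofReal_csInf_add {x : ENNReal} {T : Set ℝ} (hT : T.Nonempty) {K : ℝ}
    (h : ∀ c ∈ T, x ≤ ENNReal.ofReal (c + K)) : x ≤ ENNReal.ofReal (sInf T + K) := by
  -- no `BddBelow T` is needed: unless `x = 0`, the bound `h` keeps `T` above `-K`
  rcases eq_or_ne x 0 with rfl | hx
  · exact zero_le
  obtain ⟨c₀, hc₀⟩ := hT
  have hpos : ∀ c ∈ T, 0 < c + K := fun c hc =>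
    ENNReal.ofReal_pos.mp ((pos_iff_ne_zero.mpr hx).trans_le (h c hc))
  have hlow : x.toReal - K ≤ sInf T := le_csInf ⟨c₀, hc₀⟩ fun c hc => by
    linarith [ENNReal.toReal_le_of_le_ofReal (hpos c hc).le (h c hc)]
  rw [← ENNReal.ofReal_toReal (ne_top_of_le_ne_top ENNReal.ofReal_ne_top (h c₀ hc₀))]
  exact ENNReal.ofReal_le_ofReal (by linarith)

noncomputable def bernoulliBool (a : ℝ) : Measure Bool :=
  ENNReal.ofReal a • Measure.dirac true + ENNReal.ofReal (1 - a) • Measure.dirac false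

section Sampling

variable {Ω : Type*} [MeasurableSpace Ω] {μ : Measure Ω} [IsProbabilityMeasure μ]

lemma integral_sq_sum_of_pairwise_indepFun {ι : Type*} [Fintype ι] {Y : ι → Ω → ℝ}
    (hY : ∀ i, MemLp (Y i) 2 μ) (hindep : Pairwise fun i j => IndepFun (Y i) (Y j) μ)
    (hmean : ∀ i, μ[Y i] = 0) :
    ∫ ω, (∑ i, Y i ω) ^ 2 ∂μ = ∑ i, ∫ ω, Y i ω ^ 2 ∂μ := by
  have hvar := IndepFun.variance_sum (s := Finset.univ) (fun i _ => hY i)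
    fun i _ j _ hij => hindep hij
  have hmean_sum : μ[∑ i, Y i] = 0 := by
    simp only [Finset.sum_apply]
    rw [integral_finsetSum _ fun i _ => (hY i).integrable one_le_two]
    exact Finset.sum_eq_zero fun i _ => hmean i
  rw [variance_of_integral_eq_zero (memLp_finsetSum' _ fun i _ => hY i).aemeasurable hmean_sum]
    at hvar
  simpa [Finset.sum_apply, fun i => variance_of_integral_eq_zero (hY i).aemeasurable (hmean i)]
    using hvar

lemma integral_frobeniusSq_mul_diagonal_mul {l ι n : Type*} [Fintype l] [Fintype ι]
    [DecidableEq ι] [Fintype n] {X : ι → Ω → ℝ} (hX : ∀ i, MemLp (X i) 2 μ)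
    (hindep : Pairwise fun i j => IndepFun (X i) (X j) μ)
    (M : Matrix l ι ℝ) (N : Matrix ι n ℝ) (hmean : ∀ i b, N i b ≠ 0 → μ[X i] = 0) :
    ∫ ω, frobeniusSq (M * diagonal (fun i => X i ω) * N) ∂μ
      = ∑ i, (∑ a, M a i ^ 2) * (∑ b, N i b ^ 2) * ∫ ω, X i ω ^ 2 ∂μ := by
  set Y : l → n → ι → Ω → ℝ := fun a b i ω => M a i * N i b * X i ω
  have hY : ∀ a b i, MemLp (Y a b i) 2 μ := fun a b i => (hX i).const_mul _
  have hentry : ∀ ω a b, (M * diagonal (fun i => X i ω) * N) a b = ∑ i, Y a b i ω := by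
    intro ω a b
    rw [mul_apply]
    simp only [Y, mul_diagonal]
    exact Finset.sum_congr rfl fun i _ => by ring
  have hmeanY : ∀ a b i, μ[Y a b i] = 0 := by
    intro a b i
    rw [integral_const_mul]
    by_cases hN : N i b = 0
    · simp [hN]
    · simp [hmean i b hN]
  have hentry_sq : ∀ a b, ∫ ω, (∑ i, Y a b i ω) ^ 2 ∂μ
      = ∑ i, (M a i * N i b) ^ 2 * ∫ ω, X i ω ^ 2 ∂μ := by
    intro a b
    rw [integral_sq_sum_of_pairwise_indepFun (hY a b)
      (fun i j hij => (hindep hij).comp (measurable_const_mul _) (measurable_const_mul _))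
      (hmeanY a b)]
    refine Finset.sum_congr rfl fun i _ => ?_
    rw [← integral_const_mul]
    exact integral_congr_ae (ae_of_all _ fun ω => by simp only [Y]; ring)
  have hint : ∀ a b, Integrable (fun ω => (∑ i, Y a b i ω) ^ 2) μ := fun a b =>
    (memLp_finsetSum _ fun i _ => hY a b i).integrable_sq
  simp only [frobeniusSq, hentry]
  rw [integral_finsetSum _ fun a _ => integrable_finsetSum _ fun b _ => hint a b]
  refine (Finset.sum_congr rfl fun a _ => (integral_finsetSum _ fun b _ => hint a b).trans
    (Finset.sum_congr rfl fun b _ => hentry_sq a b)).trans ?_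
  simp only [mul_pow, Finset.sum_mul, Finset.mul_sum]
  rw [Finset.sum_comm]
  exact (Finset.sum_congr rfl fun b _ => Finset.sum_comm).trans Finset.sum_comm

lemma integral_comp_of_map_eq_bernoulliBool {Y : Ω → Bool} (hY : Measurable Y) {a : ℝ}
    (ha0 : 0 ≤ a) (ha1 : a ≤ 1) (hd : μ.map Y = bernoulliBool a) (F : Bool → ℝ) :
    ∫ ω, F (Y ω) ∂μ = a * F true + (1 - a) * F false := by
  rw [← integral_map hY.aemeasurable (measurable_of_countable F).aestronglyMeasurable,
    integral_fintype .of_finite, hd]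
  simp [bernoulliBool, Measure.real, ha0, ha1]

lemma integral_one_sub_ite_inv {Y : Ω → Bool} (hY : Measurable Y) {a : ℝ} (ha0 : 0 < a)
    (ha1 : a ≤ 1) (hd : μ.map Y = bernoulliBool a) :
    ∫ ω, (1 - if Y ω then a⁻¹ else 0) ∂μ = 0 := by
  rw [integral_comp_of_map_eq_bernoulliBool hY ha0.le ha1 hd fun b => 1 - if b then a⁻¹ else 0]
  simp only [if_true, Bool.false_eq_true, if_false]
  field_simp
  ring

lemma integral_one_sub_ite_inv_sq {Y : Ω → Bool} (hY : Measurable Y) {a : ℝ} (ha0 : 0 < a)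
    (ha1 : a ≤ 1) (hd : μ.map Y = bernoulliBool a) :
    ∫ ω, (1 - if Y ω then a⁻¹ else 0) ^ 2 ∂μ = a⁻¹ - 1 := by
  rw [integral_comp_of_map_eq_bernoulliBool hY ha0.le ha1 hd
    fun b => (1 - if b then a⁻¹ else 0) ^ 2]
  simp only [if_true, Bool.false_eq_true, if_false]
  field_simp
  ring

lemma mul_integral_one_sub_ite_inv_sq_le {Y : Ω → Bool} (hY : Measurable Y) {s α p q e E : ℝ}
    (hs : 0 < s) (hα : 0 < α) (he : 0 ≤ e) (heE : e ≤ E) (hp : α * e / E ≤ p)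
    (hq : q = min 1 (s * p)) (hd : μ.map Y = bernoulliBool q) :
    e * ∫ ω, (1 - if Y ω then q⁻¹ else 0) ^ 2 ∂μ ≤ E / (s * α) := by
  rcases he.eq_or_lt with rfl | he
  · rw [zero_mul]
    exact div_nonneg heE (by positivity)
  rw [integral_one_sub_ite_inv_sq hY (pos_of_eq_min_of_div_le hs hα he heE hp hq)
    (hq ▸ min_le_left _ _) hd, mul_comm]
  exact inv_sub_one_mul_le_div hs hα he.le heE hp hq

variable {ι κ l : Type*} [Fintype ι] [DecidableEq ι] [Fintype κ] [Fintype l]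

noncomputable def importanceWeight (q : ι → ℝ) (z : ι → Bool) (i : ι) : ℝ :=
  if z i then (q i)⁻¹ else 0

noncomputable def residualSampleApprox (U : Matrix ι l ℝ) (A : Matrix ι κ ℝ) (P : Matrix κ κ ℝ)
    (q : ι → ℝ) (z : ι → Bool) : Matrix ι κ ℝ :=
  U * Uᵀ * (A * P + diagonal (importanceWeight q z) * (A - A * P))

lemma rank_residualSampleApprox_le (U : Matrix ι l ℝ) (A : Matrix ι κ ℝ) (P : Matrix κ κ ℝ)
    (q : ι → ℝ) (z : ι → Bool) : (residualSampleApprox U A P q z).rank ≤ Fintype.card l := by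
  rw [residualSampleApprox, Matrix.mul_assoc]
  exact (rank_mul_le_left _ _).trans U.rank_le_card_width

lemma span_rows_residualSampleApprox_le {V : Submodule ℝ (κ → ℝ)} {P : Matrix κ κ ℝ}
    (hP : ∀ x, x ᵥ* P ∈ V) (U : Matrix ι l ℝ) (A : Matrix ι κ ℝ) (q : ι → ℝ) (z : ι → Bool) :
    Submodule.span ℝ (Set.range (residualSampleApprox U A P q z)) ≤
      V ⊔ Submodule.span ℝ {v | ∃ i, z i = true ∧ v = A i} := by
  refine (span_rows_mul_le _ _).trans (Submodule.span_le.mpr ?_)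
  rintro _ ⟨i, rfl⟩
  have hrow : (A * P + diagonal (importanceWeight q z) * (A - A * P)) i
      = A i ᵥ* P + importanceWeight q z i • (A i - A i ᵥ* P) := by
    ext j
    simp [mul_apply_eq_vecMul, diagonal_mul, Matrix.sub_apply]
  rw [hrow, SetLike.mem_coe]
  refine Submodule.add_mem _ (Submodule.mem_sup_left (hP _)) ?_
  by_cases hz : z i = true
  · exact Submodule.smul_mem _ _ (Submodule.sub_mem _
      (Submodule.mem_sup_right (Submodule.subset_span ⟨i, hz, rfl⟩))
      (Submodule.mem_sup_left (hP _)))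
  · simp [importanceWeight, hz]

lemma frobeniusSq_sub_residualSampleApprox [DecidableEq l] {U : Matrix ι l ℝ} (hU : Uᵀ * U = 1)
    (A : Matrix ι κ ℝ) (P : Matrix κ κ ℝ) (q : ι → ℝ) (z : ι → Bool) :
    frobeniusSq (A - residualSampleApprox U A P q z) = frobeniusSq (A - U * Uᵀ * A) +
      frobeniusSq (Uᵀ * diagonal (fun i => 1 - importanceWeight q z i) * (A - A * P)) := by
  rw [residualSampleApprox, Matrix.mul_assoc U, frobeniusSq_sub_mul hU]
  congr 2
  rw [← diagonal_sub, diagonal_one]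
  simp only [Matrix.mul_sub, Matrix.mul_add, Matrix.sub_mul, Matrix.one_mul, Matrix.mul_assoc]
  abel

lemma integral_frobeniusSq_mul_diagonal_one_sub_importanceWeight_le [DecidableEq l]
    {U : Matrix ι l ℝ} (hU : Uᵀ * U = 1) (E : Matrix ι κ ℝ) {s α : ℝ} (hs : 0 < s) (hα : 0 < α)
    {p q : ι → ℝ} (hp : ∀ i, α * (∑ j, E i j ^ 2) / frobeniusSq E ≤ p i)
    (hq : ∀ i, q i = min 1 (s * p i)) {Z : Ω → ι → Bool}
    (hmeas : ∀ i, Measurable fun ω => Z ω i) (hindep : iIndepFun (fun i ω => Z ω i) μ)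
    (hdist : ∀ i, μ.map (fun ω => Z ω i) = bernoulliBool (q i)) :
    ∫ ω, frobeniusSq (Uᵀ * diagonal (fun i => 1 - importanceWeight q (Z ω) i) * E) ∂μ ≤
      (Fintype.card l / (s * α)) * frobeniusSq E := by
  set F : ι → Bool → ℝ := fun i b => 1 - if b then (q i)⁻¹ else 0
  have hX : ∀ i, MemLp (F i ∘ fun ω => Z ω i) 2 μ := fun i =>
    (memLp_map_measure_iff (measurable_of_countable _).aestronglyMeasurable
      (hmeas i).aemeasurable).1 .of_discrete
  have hXindep : Pairwise fun i j => IndepFun (F i ∘ fun ω => Z ω i) (F j ∘ fun ω => Z ω j) μ :=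
    fun i j hij =>
      (hindep.indepFun hij).comp (measurable_of_countable _) (measurable_of_countable _)
  have hrow_le : ∀ i, (∑ j, E i j ^ 2) ≤ frobeniusSq E := fun i =>
    Finset.single_le_sum (f := fun i => ∑ j, E i j ^ 2) (fun _ _ => by positivity)
      (Finset.mem_univ i)
  have hmean : ∀ i j, E i j ≠ 0 → ∫ ω, F i (Z ω i) ∂μ = 0 := by
    intro i j hij
    have he : 0 < ∑ j, E i j ^ 2 :=
      Finset.sum_pos' (fun _ _ => by positivity) ⟨j, Finset.mem_univ j, by positivity⟩
    exact integral_one_sub_ite_inv (hmeas i)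
      (pos_of_eq_min_of_div_le hs hα he (hrow_le i) (hp i) (hq i)) (hq i ▸ min_le_left _ _)
      (hdist i)
  have hcols : ∑ i, ∑ t, Uᵀ t i ^ 2 = Fintype.card l := by
    rw [← trace_one (n := l) (R := ℝ), ← hU, ← frobeniusSq_eq_trace]
    rfl
  calc _ = ∑ i, (∑ t, Uᵀ t i ^ 2) * (∑ j, E i j ^ 2) * ∫ ω, F i (Z ω i) ^ 2 ∂μ :=
        integral_frobeniusSq_mul_diagonal_mul hX hXindep _ _ hmean
    _ ≤ ∑ i, (∑ t, Uᵀ t i ^ 2) * (frobeniusSq E / (s * α)) := by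
        refine Finset.sum_le_sum fun i _ => ?_
        rw [mul_assoc]
        exact mul_le_mul_of_nonneg_left (mul_integral_one_sub_ite_inv_sq_le (hmeas i) hs hα
          (by positivity) (hrow_le i) (hp i) (hq i) (hdist i)) (by positivity)
    _ = (Fintype.card l / (s * α)) * frobeniusSq E := by
        rw [← Finset.sum_mul, hcols]
        ring

lemma integral_frobeniusSq_sub_residualSampleApprox_le [DecidableEq l] {U : Matrix ι l ℝ}
    (hU : Uᵀ * U = 1) {A B : Matrix ι κ ℝ} (hUB : U * Uᵀ * B = B) (P : Matrix κ κ ℝ)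
    {s α : ℝ} (hs : 0 < s) (hα : 0 < α) {p q : ι → ℝ}
    (hp : ∀ i, α * (∑ j, (A - A * P) i j ^ 2) / frobeniusSq (A - A * P) ≤ p i)
    (hq : ∀ i, q i = min 1 (s * p i)) {Z : Ω → ι → Bool}
    (hmeas : ∀ i, Measurable fun ω => Z ω i) (hindep : iIndepFun (fun i ω => Z ω i) μ)
    (hdist : ∀ i, μ.map (fun ω => Z ω i) = bernoulliBool (q i)) :
    ∫ ω, frobeniusSq (A - residualSampleApprox U A P q (Z ω)) ∂μ ≤
      frobeniusSq (A - B) + (Fintype.card l / (s * α)) * frobeniusSq (A - A * P) := by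
  have hint : Integrable (fun ω => frobeniusSq
      (Uᵀ * diagonal (fun i => 1 - importanceWeight q (Z ω) i) * (A - A * P))) μ :=
    (Integrable.of_finite (f := fun z : ι → Bool => frobeniusSq
      (Uᵀ * diagonal (fun i => 1 - importanceWeight q z i) * (A - A * P)))).comp_measurable
      (measurable_pi_lambda _ hmeas)
  simp_rw [frobeniusSq_sub_residualSampleApprox hU]
  rw [integral_add (integrable_const _) hint, integral_const, probReal_univ, one_smul]
  exact add_le_add (frobeniusSq_sub_mul_transpose_mul_le hU hUB)
    (integral_frobeniusSq_mul_diagonal_one_sub_importanceWeight_le hU _ hs hα hp hq hmeas hindep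
      hdist)

end Sampling

theorem residual_sampling_general {Ω : Type*} [MeasurableSpace Ω]
    (μ : Measure Ω) [IsProbabilityMeasure μ]
    (n d : ℕ) (A : Matrix (Fin n) (Fin d) ℝ)
    (V : Submodule ℝ (Fin d → ℝ)) (P : Matrix (Fin d) (Fin d) ℝ)
    (hPsymm : Pᵀ = P)
    (hPrange : Set.range P.mulVec = (V : Set (Fin d → ℝ)))
    (E : Matrix (Fin n) (Fin d) ℝ) (hE : E = A - A * P)
    (k : ℕ) (s α : ℝ) (hs : 0 < s) (hα0 : 0 < α)
    (p : Fin n → ℝ)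
    (hp : ∀ i, α * (∑ j, (E i j) ^ 2) / (∑ i', ∑ j, (E i' j) ^ 2) ≤ p i)
    (q : Fin n → ℝ) (hq : ∀ i, q i = min 1 (s * p i))
    (Z : Ω → Fin n → Bool)
    (hmeas : ∀ i, Measurable fun ω => Z ω i)
    (hindep : iIndepFun (fun i ω => Z ω i) μ)
    (hdist : ∀ i, Measure.map (fun ω => Z ω i) μ =
      ENNReal.ofReal (q i) • Measure.dirac true +
      ENNReal.ofReal (1 - q i) • Measure.dirac false) :
    (∫⁻ ω, ENNReal.ofReal (sInf {r : ℝ | ∃ B : Matrix (Fin n) (Fin d) ℝ,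
        B.rank ≤ k ∧
        Submodule.span ℝ (Set.range fun i => B i) ≤
          V ⊔ Submodule.span ℝ {v : Fin d → ℝ | ∃ i, Z ω i = true ∧ v = A i} ∧
        r = ∑ i, ∑ j, (A i j - B i j) ^ 2}) ∂μ) ≤
      ENNReal.ofReal
        (sInf {r : ℝ | ∃ B : Matrix (Fin n) (Fin d) ℝ, B.rank ≤ k ∧
            r = ∑ i, ∑ j, (A i j - B i j) ^ 2} +
          ((k : ℝ) / (s * α)) * ∑ i, ∑ j, (E i j) ^ 2) := by
  subst hE
  have hPV : ∀ x, x ᵥ* P ∈ V := fun x => by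
    rw [← mulVec_transpose, hPsymm, ← SetLike.mem_coe, ← hPrange]
    exact ⟨x, rfl⟩
  refine ENNReal.le_ofReal_csInf_add ?_ ?_
  · exact ⟨_, 0, by simp, rfl⟩
  rintro _ ⟨B₀, hB₀, rfl⟩
  obtain ⟨U, hU, hUB⟩ := exists_orthonormal_cols_mul_transpose_mul B₀
  have hint : Integrable (fun ω => frobeniusSq (A - residualSampleApprox U A P q (Z ω))) μ :=
    (Integrable.of_finite (f := fun z => frobeniusSq (A - residualSampleApprox U A P q z))
      ).comp_measurable (measurable_pi_lambda _ hmeas)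
  calc _ ≤ ∫⁻ ω, ENNReal.ofReal (frobeniusSq (A - residualSampleApprox U A P q (Z ω))) ∂μ := by
        refine lintegral_mono fun ω => ENNReal.ofReal_le_ofReal (csInf_le ⟨0, ?_⟩
          ⟨_, ?_, span_rows_residualSampleApprox_le hPV U A q (Z ω), rfl⟩)
        · rintro _ ⟨B, -, -, rfl⟩
          positivity
        · exact (rank_residualSampleApprox_le U A P q (Z ω)).trans (by simpa using hB₀)
    _ = ENNReal.ofReal (∫ ω, frobeniusSq (A - residualSampleApprox U A P q (Z ω)) ∂μ) :=
        (ofReal_integral_eq_lintegral_ofReal hint (ae_of_all _ fun ω => frobeniusSq_nonneg _)).symm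
    _ ≤ _ := by
        refine ENNReal.ofReal_le_ofReal ((integral_frobeniusSq_sub_residualSampleApprox_le hU hUB P
          hs hα0 hp hq hmeas hindep hdist).trans (add_le_add le_rfl ?_))
        exact mul_le_mul_of_nonneg_right
          (div_le_div_of_nonneg_right (by simpa using hB₀) (by positivity)) (frobeniusSq_nonneg _)

/-- Residual sampling (adaptive sampling). Including each row `i` of `A`
independently with probability `q_i = min(1, s·p_i)`, where
`p_i ≥ α·‖E_{i*}‖₂²/‖E‖_F²` and `E = A - A·P_V`, the expected cost of the best rank-`k`
approximation with row span inside `V + rowspan(A_S)` is at most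
`‖A - [A]_k‖_F² + (k/(s·α))·‖E‖_F²`. -/
theorem residual_sampling {Ω : Type*} [MeasurableSpace Ω]
    (μ : Measure Ω) [IsProbabilityMeasure μ]
    (n d : ℕ) (A : Matrix (Fin n) (Fin d) ℝ)
    (V : Submodule ℝ (Fin d → ℝ)) (P : Matrix (Fin d) (Fin d) ℝ)
    (hPsymm : Pᵀ = P) (hPidem : P * P = P)
    (hPrange : Set.range P.mulVec = (V : Set (Fin d → ℝ)))
    (E : Matrix (Fin n) (Fin d) ℝ) (hE : E = A - A * P)
    (k : ℕ) (s α : ℝ) (hs : 0 < s) (hα0 : 0 < α) (hα1 : α ≤ 1)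
    (p : Fin n → ℝ)
    (hp : ∀ i, α * (∑ j, (E i j) ^ 2) / (∑ i', ∑ j, (E i' j) ^ 2) ≤ p i)
    (q : Fin n → ℝ) (hq : ∀ i, q i = min 1 (s * p i))
    (Z : Ω → Fin n → Bool)
    (hmeas : ∀ i, Measurable fun ω => Z ω i)
    (hindep : iIndepFun (fun i ω => Z ω i) μ)
    (hdist : ∀ i, Measure.map (fun ω => Z ω i) μ =
      ENNReal.ofReal (q i) • Measure.dirac true +
      ENNReal.ofReal (1 - q i) • Measure.dirac false) :
    (∫⁻ ω, ENNReal.ofReal (sInf {r : ℝ | ∃ B : Matrix (Fin n) (Fin d) ℝ,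
        B.rank ≤ k ∧
        Submodule.span ℝ (Set.range fun i => B i) ≤
          V ⊔ Submodule.span ℝ {v : Fin d → ℝ | ∃ i, Z ω i = true ∧ v = A i} ∧
        r = ∑ i, ∑ j, (A i j - B i j) ^ 2}) ∂μ) ≤
      ENNReal.ofReal
        (sInf {r : ℝ | ∃ B : Matrix (Fin n) (Fin d) ℝ, B.rank ≤ k ∧
            r = ∑ i, ∑ j, (A i j - B i j) ^ 2} +
          ((k : ℝ) / (s * α)) * ∑ i, ∑ j, (E i j) ^ 2) :=
  residual_sampling_general μ n d A V P hPsymm hPrange E hE k s α hs hα0 p hp q hq Z hmeas hindep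
    hdist
end

section
/- Let A ∈ ℝ^{n×k}, b ∈ ℝ^n, and ε ∈ (0,1). Suppose S is a matrix such that for every vector y in the column span of the augmented matrix [A, b] ∈ ℝ^{n×(k+1)}, (1−ε)‖y‖₂ ≤ ‖Sy‖₂ ≤ (1+ε)‖y‖₂. If x* ∈ ℝ^k satisfies ‖SAx* − Sb‖₂ ≤ (1+ε)·min_{x∈ℝ^k} ‖SAx − Sb‖₂, then ‖Ax* − b‖₂ ≤ ((1+ε)²/(1−ε))·min_{x∈ℝ^k} ‖Ax − b‖₂. -/
/-! The residual `A x - b` lies in the column span of `[A, b]` (take `c = -1`), so the sketch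
distorts every residual norm by a factor in `[1 - ε, 1 + ε]`. Chaining the lower bound at `x*`,
the near-optimality of `x*` for the sketched problem, and the upper bound at `x` gives
`(1 - ε) ‖A x* - b‖ ≤ (1 + ε)² ‖A x - b‖`. -/

theorem le_mul_of_approx_min_of_bounds {X : Type*} (cost sketched : X → ℝ) {c C α : ℝ}
    (hc : 0 < c) (hα : 0 ≤ α) (hlow : ∀ x, c * cost x ≤ sketched x)
    (hup : ∀ x, sketched x ≤ C * cost x) (xstar : X)
    (hxstar : ∀ x, sketched xstar ≤ α * sketched x) (x : X) :
    cost xstar ≤ α * C / c * cost x := by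
  have hchain : c * cost xstar ≤ c * (α * C / c * cost x) :=
    calc c * cost xstar ≤ sketched xstar := hlow xstar
      _ ≤ α * sketched x := hxstar x
      _ ≤ α * (C * cost x) := mul_le_mul_of_nonneg_left (hup x) hα
      _ = c * (α * C / c * cost x) := by field_simp
  exact le_of_mul_le_mul_left hchain hc

/-- Sketch-and-solve for least squares regression: if `S` is a `(1±ε)`
subspace embedding for the column span of `[A, b]` and `x*` is a `(1+ε)`-approximate
minimizer of the sketched problem, then `x*` is a `((1+ε)²/(1-ε))`-approximate minimizer of
the original regression problem. -/
theorem sketch_and_solve_regression (n k s : ℕ)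
    (A : Matrix (Fin n) (Fin k) ℝ) (b : Fin n → ℝ)
    (ε : ℝ) (hε0 : 0 < ε) (hε1 : ε < 1)
    (S : Matrix (Fin s) (Fin n) ℝ)
    (hS : ∀ (x : Fin k → ℝ) (c : ℝ),
      (1 - ε) * Real.sqrt (∑ i, (A.mulVec x i + c * b i) ^ 2) ≤
        Real.sqrt (∑ i, (S.mulVec (fun l => A.mulVec x l + c * b l) i) ^ 2) ∧
      Real.sqrt (∑ i, (S.mulVec (fun l => A.mulVec x l + c * b l) i) ^ 2) ≤
        (1 + ε) * Real.sqrt (∑ i, (A.mulVec x i + c * b i) ^ 2))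
    (xstar : Fin k → ℝ)
    (hxstar : ∀ x : Fin k → ℝ,
      Real.sqrt (∑ i, (S.mulVec (fun l => A.mulVec xstar l - b l) i) ^ 2) ≤
        (1 + ε) * Real.sqrt (∑ i, (S.mulVec (fun l => A.mulVec x l - b l) i) ^ 2)) :
    ∀ x : Fin k → ℝ,
      Real.sqrt (∑ i, (A.mulVec xstar i - b i) ^ 2) ≤
        ((1 + ε) ^ 2 / (1 - ε)) * Real.sqrt (∑ i, (A.mulVec x i - b i) ^ 2) := by
  intro x
  have hresidual (y : Fin k → ℝ) :
      (1 - ε) * √(∑ i, (A.mulVec y i - b i) ^ 2) ≤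
          √(∑ i, (S.mulVec (fun l => A.mulVec y l - b l) i) ^ 2) ∧
        √(∑ i, (S.mulVec (fun l => A.mulVec y l - b l) i) ^ 2) ≤
          (1 + ε) * √(∑ i, (A.mulVec y i - b i) ^ 2) := by
    simpa only [sub_eq_add_neg, neg_one_mul] using hS y (-1)
  rw [sq]
  exact le_mul_of_approx_min_of_bounds _ _ (by linarith) (by linarith)
    (fun y => (hresidual y).1) (fun y => (hresidual y).2) xstar hxstar x
end

section
/- Let A ∈ ℝ^{n×d}, let k ≥ 1 be an integer, and let T ∈ ℝ^{d×t} and S ∈ ℝ^{s×n} be matrices such that: (i) for every orthogonal projection matrix P ∈ ℝ^{n×n} of rank at most k, (1 − 1/10)·‖(I−P)A‖_F² ≤ ‖(I−P)AT‖_F² ≤ (1 + 1/10)·‖(I−P)A‖_F²; and (ii) for every x ∈ ℝ^t, (1 − 1/10)·‖ATx‖₂² ≤ ‖SATx‖₂² ≤ (1 + 1/10)·‖ATx‖₂². Then min{ ‖SAT − B‖_F² : B ∈ ℝ^{s×t}, rank(B) ≤ k } ≤ (11/9)·min{ ‖A − B'‖_F² : B' ∈ ℝ^{n×d}, rank(B')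 ≤ k }. -/
/-!
Let `B'` have rank at most `k` and let `P` be the orthogonal projection onto its column space.
Then `‖(1 - P)A‖_F ≤ ‖A - B'‖_F`, and the sketch `T` gives `‖(1 - P)AT‖_F² ≤ 1.1 ‖(1 - P)A‖_F²`.
With `Q` the orthogonal projection onto the column space of `AT`, the matrix `QPAT` has rank at
most `k` and `AT - QPAT = Q(1 - P)AT` is no larger than `(1 - P)AT`; since its columns lie in the
column space of `AT`, the subspace embedding `S` loses at most another factor `1.1`. Hence `SQPAT`
witnesses a cost of at most `1.1² ≤ 11/9` times `‖A - B'‖_F²`.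
-/

open Matrix

namespace Matrix

variable {m m' n l ι : Type*} [Fintype n] [Fintype l] [Fintype ι]

theorem sum_sq_mul_le_of_mulVec [Fintype m] [Fintype m'] {M : Matrix m l ℝ} {N : Matrix m' l ℝ}
    {C : ℝ} (h : ∀ x, ∑ i, (M *ᵥ x) i ^ 2 ≤ C * ∑ i, (N *ᵥ x) i ^ 2) (Y : Matrix l ι ℝ) :
    ∑ i, ∑ j, (M * Y) i j ^ 2 ≤ C * ∑ i, ∑ j, (N * Y) i j ^ 2 := by
  change ∑ i, ∑ j, (M *ᵥ Yᵀ j) i ^ 2 ≤ C * ∑ i, ∑ j, (N *ᵥ Yᵀ j) i ^ 2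
  rw [Finset.sum_comm, Finset.sum_comm (γ := m'), Finset.mul_sum]
  exact Finset.sum_le_sum fun j _ => h (Yᵀ j)

theorem exists_isStarProjection_onto_colSpace {𝕜 : Type*} [RCLike 𝕜] [DecidableEq n]
    [DecidableEq ι] (X : Matrix n ι 𝕜) :
    ∃ P : Matrix n n 𝕜, IsStarProjection P ∧ P.rank ≤ X.rank ∧ P * X = X ∧
      ∃ G : Matrix ι n 𝕜, X * G = P := by
  set V := LinearMap.range (toEuclideanLin X)
  set P : Matrix n n 𝕜 := (toEuclideanCLM (n := n) (𝕜 := 𝕜)).symm V.starProjection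
  have hP : toEuclideanLin P = V.starProjection := by
    rw [← coe_toEuclideanCLM_eq_toEuclideanLin, StarAlgEquiv.apply_symm_apply]
  have hmem : ∀ y, toEuclideanLin P y ∈ V := fun y => by
    rw [hP]; exact V.starProjection_apply_mem y
  refine ⟨P, isStarProjection_starProjection.map (toEuclideanCLM (n := n) (𝕜 := 𝕜)).symm,
    ?_, ?_, ?_⟩
  · rw [rank_eq_finrank_range_toLin P (EuclideanSpace.basisFun n 𝕜).toBasis
        (EuclideanSpace.basisFun n 𝕜).toBasis, rank_eq_finrank_range_toLin X
        (EuclideanSpace.basisFun n 𝕜).toBasis (EuclideanSpace.basisFun ι 𝕜).toBasis,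
      ← toEuclideanLin_eq_toLin_orthonormal, ← toEuclideanLin_eq_toLin_orthonormal]
    exact Submodule.finrank_mono (by rintro _ ⟨y, rfl⟩; exact hmem y)
  · apply toEuclideanLin.injective
    ext1 x
    rw [toLpLin_mul_same, LinearMap.comp_apply, hP]
    exact V.starProjection_eq_self_iff.mpr ⟨x, rfl⟩
  · choose g hg using fun j => hmem (EuclideanSpace.single j 1)
    refine ⟨of fun i j => g j i, ?_⟩
    ext i j
    have hij := congrArg (fun v => v i) (hg j)
    rw [mul_apply]
    simpa [mulVec, dotProduct, toLpLin_apply] using hij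

end Matrix

namespace IsStarProjection

variable {n ι : Type*} [Fintype n] [Fintype ι] [DecidableEq n] {P : Matrix n n ℝ}

theorem sum_sq_mulVec_le (hP : IsStarProjection P) (x : n → ℝ) :
    ∑ i, (P *ᵥ x) i ^ 2 ≤ ∑ i, x i ^ 2 := by
  obtain ⟨K, _, hK⟩ :=
    isStarProjection_iff_eq_starProjection.mp (hP.map (toEuclideanCLM (n := n) (𝕜 := ℝ)))
  have hle := K.norm_starProjection_apply_le (WithLp.toLp 2 x)
  rw [← hK] at hle
  simpa [EuclideanSpace.real_norm_sq_eq] using pow_le_pow_left₀ (norm_nonneg _) hle 2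

theorem sum_sq_mul_le (hP : IsStarProjection P) (Y : Matrix n ι ℝ) :
    ∑ i, ∑ j, (P * Y) i j ^ 2 ≤ ∑ i, ∑ j, Y i j ^ 2 := by
  have := sum_sq_mul_le_of_mulVec (M := P) (N := 1) (C := 1)
    (fun x => by rw [one_mulVec, one_mul]; exact hP.sum_sq_mulVec_le x) Y
  rwa [Matrix.one_mul, one_mul] at this

end IsStarProjection

theorem exists_rank_le_sum_sq_sketch_le {n d t s : Type*} [Fintype n] [Fintype d] [Fintype t]
    [Fintype s] [DecidableEq n] {α β : ℝ} (hα : 0 ≤ α) (hβ : 0 ≤ β) (k : ℕ)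
    (A : Matrix n d ℝ) (T : Matrix d t ℝ) (S : Matrix s n ℝ)
    (hT : ∀ P : Matrix n n ℝ, IsStarProjection P → P.rank ≤ k →
      ∑ i, ∑ j, ((1 - P) * A * T : Matrix n t ℝ) i j ^ 2 ≤
        α * ∑ i, ∑ j, ((1 - P) * A : Matrix n d ℝ) i j ^ 2)
    (hS : ∀ x, ∑ i, ((S * A * T) *ᵥ x) i ^ 2 ≤ β * ∑ i, ((A * T) *ᵥ x) i ^ 2)
    (B' : Matrix n d ℝ) (hB' : B'.rank ≤ k) :
    ∃ B : Matrix s t ℝ, B.rank ≤ k ∧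
      ∑ i, ∑ j, (S * A * T - B) i j ^ 2 ≤ β * α * ∑ i, ∑ j, (A - B') i j ^ 2 := by
  classical
  obtain ⟨P, hP, hPrank, hPB', -⟩ := B'.exists_isStarProjection_onto_colSpace
  obtain ⟨Q, hQ, -, hQAT, G, hG⟩ := (A * T).exists_isStarProjection_onto_colSpace
  set Z := G * P * (A * T)
  have hZ : A * T * (1 - Z) = Q * ((1 - P) * A * T) := by
    simp only [Z, Matrix.mul_sub, Matrix.sub_mul, Matrix.mul_one, Matrix.one_mul,
      ← Matrix.mul_assoc, hG, hQAT]
  have hA : (1 - P) * A = (1 - P) * (A - B') := by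
    rw [Matrix.mul_sub, Matrix.sub_mul 1 P B', hPB', Matrix.one_mul, sub_self, sub_zero]
  refine ⟨S * A * T * Z, ?_, ?_⟩
  · exact (rank_mul_le_right _ _).trans <| (rank_mul_le_left _ _).trans <|
      (rank_mul_le_right _ _).trans (hPrank.trans hB')
  calc ∑ i, ∑ j, (S * A * T - S * A * T * Z) i j ^ 2
      = ∑ i, ∑ j, (S * A * T * (1 - Z) : Matrix s t ℝ) i j ^ 2 := by
        rw [Matrix.mul_sub, Matrix.mul_one]
    _ ≤ β * ∑ i, ∑ j, (A * T * (1 - Z) : Matrix n t ℝ) i j ^ 2 := by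
      simpa only [Matrix.mul_assoc] using sum_sq_mul_le_of_mulVec hS (1 - Z)
    _ ≤ β * ∑ i, ∑ j, ((1 - P) * A * T : Matrix n t ℝ) i j ^ 2 := by
      rw [hZ]; exact mul_le_mul_of_nonneg_left (hQ.sum_sq_mul_le _) hβ
    _ ≤ β * (α * ∑ i, ∑ j, ((1 - P) * A : Matrix n d ℝ) i j ^ 2) := by
      gcongr; exact hT P hP (hPrank.trans hB')
    _ ≤ β * (α * ∑ i, ∑ j, (A - B') i j ^ 2) := by
      rw [hA]; gcongr ?_ * (?_ * ?_); exact hP.one_sub.sum_sq_mul_le _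
    _ = β * α * ∑ i, ∑ j, (A - B') i j ^ 2 := by ring

theorem Real.sInf_le_mul_sInf {s₁ s₂ : Set ℝ} {c : ℝ} (hc : 0 < c) (h₁ : BddBelow s₁)
    (h₂ : s₂.Nonempty) (h : ∀ r ∈ s₂, ∃ r' ∈ s₁, r' ≤ c * r) : sInf s₁ ≤ c * sInf s₂ := by
  rw [← div_le_iff₀' hc]
  refine le_csInf h₂ fun r hr => ?_
  obtain ⟨r', hr', hle⟩ := h r hr
  rw [div_le_iff₀' hc]
  exact (csInf_le h₁ hr').trans hle

theorem pcp_sketch_opt_bound_general (n d t s k : ℕ)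
    (A : Matrix (Fin n) (Fin d) ℝ) (T : Matrix (Fin d) (Fin t) ℝ)
    (S : Matrix (Fin s) (Fin n) ℝ)
    (hT : ∀ P : Matrix (Fin n) (Fin n) ℝ, P * P = P → Pᵀ = P → P.rank ≤ k →
      (1 - 1 / 10) * (∑ i, ∑ j, (((1 - P) * A : Matrix (Fin n) (Fin d) ℝ) i j) ^ 2) ≤
        (∑ i, ∑ j, (((1 - P) * A * T : Matrix (Fin n) (Fin t) ℝ) i j) ^ 2) ∧
      (∑ i, ∑ j, (((1 - P) * A * T : Matrix (Fin n) (Fin t) ℝ) i j) ^ 2) ≤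
        (1 + 1 / 10) * (∑ i, ∑ j, (((1 - P) * A : Matrix (Fin n) (Fin d) ℝ) i j) ^ 2))
    (hS : ∀ x : Fin t → ℝ,
      (1 - 1 / 10) * (∑ i, ((A * T).mulVec x i) ^ 2) ≤
        (∑ i, ((S * A * T).mulVec x i) ^ 2) ∧
      (∑ i, ((S * A * T).mulVec x i) ^ 2) ≤
        (1 + 1 / 10) * (∑ i, ((A * T).mulVec x i) ^ 2)) :
    sInf {r : ℝ | ∃ B : Matrix (Fin s) (Fin t) ℝ, B.rank ≤ k ∧
        r = ∑ i, ∑ j, ((S * A * T - B) i j) ^ 2} ≤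
      (11 / 9) * sInf {r : ℝ | ∃ B' : Matrix (Fin n) (Fin d) ℝ, B'.rank ≤ k ∧
        r = ∑ i, ∑ j, ((A - B') i j) ^ 2} := by
  have hT' : ∀ P : Matrix (Fin n) (Fin n) ℝ, IsStarProjection P → P.rank ≤ k →
      ∑ i, ∑ j, ((1 - P) * A * T : Matrix (Fin n) (Fin t) ℝ) i j ^ 2 ≤
        (1 + 1 / 10) * ∑ i, ∑ j, ((1 - P) * A : Matrix (Fin n) (Fin d) ℝ) i j ^ 2 :=
    fun P hP hPk => (hT P hP.isIdempotentElem.eq (by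
      simpa [star_eq_conjTranspose, conjTranspose_eq_transpose_of_trivial]
        using hP.isSelfAdjoint.star_eq) hPk).2
  refine Real.sInf_le_mul_sInf (by norm_num) ⟨0, ?_⟩ ⟨_, 0, by simp, rfl⟩ ?_
  · rintro _ ⟨B, -, rfl⟩
    positivity
  · rintro _ ⟨B', hB', rfl⟩
    obtain ⟨B, hB, hle⟩ := exists_rank_le_sum_sq_sketch_le (by norm_num) (by norm_num) k A T S
      hT' (fun x => (hS x).2) B' hB'
    exact ⟨_, ⟨B, hB, rfl⟩, hle.trans (by gcongr; norm_num)⟩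

/-- If `T` is a `(1 ± 1/10)` projection-cost preserving sketch of `A` for
rank-`k` projections and `S` is a `(1 ± 1/10)` subspace embedding for the column span of
`AT`, then the best rank-`k` approximation cost of `SAT` is at most `11/9` times that of
`A`. -/
theorem pcp_sketch_opt_bound (n d t s k : ℕ) (hk : 1 ≤ k)
    (A : Matrix (Fin n) (Fin d) ℝ) (T : Matrix (Fin d) (Fin t) ℝ)
    (S : Matrix (Fin s) (Fin n) ℝ)
    (hT : ∀ P : Matrix (Fin n) (Fin n) ℝ, P * P = P → Pᵀ = P → P.rank ≤ k →
      (1 - 1 / 10) * (∑ i, ∑ j, (((1 - P) * A : Matrix (Fin n) (Fin d) ℝ) i j) ^ 2) ≤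
        (∑ i, ∑ j, (((1 - P) * A * T : Matrix (Fin n) (Fin t) ℝ) i j) ^ 2) ∧
      (∑ i, ∑ j, (((1 - P) * A * T : Matrix (Fin n) (Fin t) ℝ) i j) ^ 2) ≤
        (1 + 1 / 10) * (∑ i, ∑ j, (((1 - P) * A : Matrix (Fin n) (Fin d) ℝ) i j) ^ 2))
    (hS : ∀ x : Fin t → ℝ,
      (1 - 1 / 10) * (∑ i, ((A * T).mulVec x i) ^ 2) ≤
        (∑ i, ((S * A * T).mulVec x i) ^ 2) ∧
      (∑ i, ((S * A * T).mulVec x i) ^ 2) ≤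
        (1 + 1 / 10) * (∑ i, ((A * T).mulVec x i) ^ 2)) :
    sInf {r : ℝ | ∃ B : Matrix (Fin s) (Fin t) ℝ, B.rank ≤ k ∧
        r = ∑ i, ∑ j, ((S * A * T - B) i j) ^ 2} ≤
      (11 / 9) * sInf {r : ℝ | ∃ B' : Matrix (Fin n) (Fin d) ℝ, B'.rank ≤ k ∧
        r = ∑ i, ∑ j, ((A - B') i j) ^ 2} :=
  pcp_sketch_opt_bound_general n d t s k A T S hT hS
end
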